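/- arXiv:1707.09449 — 6 statements merged into one kernel-verified Lean document; each statement's English description precedes it below -/
import Mathlib

section
/- Let V be a real inner product space, W ⊆ V a subspace, and π a self-adjoint idempotent on V with block components R : W → W and S : W → W⊥. Then ker S = ker R ⊕ ker(id − R) (an orthogonal direct sum inside W), and R(ker S) = ker(id − R). -/
/-!
Since `Sx ⊥ W`, the compression `R` inherits the symmetry of `π`. For `x ∈ W`, Pythagoras
and `⟪πx, x⟫ = ‖πx‖²` give `‖Sx‖² = ⟪(R - R²)x, x⟫`; conversely, if `Sx = 0` then `πx = Rx`
is fixed by `π`, and the `W`-component of `π(Rx)` is `R²x`. Hence `ker S = ker (R - R²)`,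
on which `R (id - R) = 0` splits every vector as `(x - Rx) + Rx`; the two summands are
eigenvectors of the symmetric map `R` for the eigenvalues `0` and `1`, hence orthogonal.
-/

open RealInnerProductSpace

namespace LinearMap

section Endomorphism

variable {K M : Type*} [Ring K] [AddCommGroup M] [Module K M] (f : M →ₗ[K] M)

theorem ker_sub_comp_self_eq_sup :
    ker (f - f ∘ₗ f) = ker f ⊔ ker (id - f) := by
  apply le_antisymm
  · intro x hx
    have hff : f (f x) = f x := (sub_eq_zero.mp hx).symm
    have hx₁ : x - f x ∈ ker f := by simp [hff]
    have hx₂ : f x ∈ ker (id - f) := by simp [hff]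
    simpa using Submodule.add_mem_sup hx₁ hx₂
  · refine sup_le (fun x hx => ?_) (fun x hx => ?_)
    · simp_all
    · have hfx : f x = x := (sub_eq_zero.mp hx).symm
      simp [hfx]

theorem ker_inf_ker_id_sub_eq_bot : ker f ⊓ ker (id - f) = ⊥ := by
  refine (Submodule.eq_bot_iff _).mpr fun x hx => ?_
  obtain ⟨hx₀, hx₁⟩ := Submodule.mem_inf.mp hx
  simpa [show f x = 0 from hx₀] using hx₁

theorem map_ker_sub_comp_self : (ker (f - f ∘ₗ f)).map f = ker (id - f) := by
  apply le_antisymm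
  · rintro _ ⟨x, hx, rfl⟩
    simpa [sub_eq_zero, eq_comm] using hx
  · intro y hy
    have hfy : f y = y := (sub_eq_zero.mp hy).symm
    exact ⟨y, by simp [hfy], hfy⟩

end Endomorphism

theorem IsSymmetric.inner_eq_zero_of_mem_ker_of_mem_ker_id_sub {E : Type*}
    [NormedAddCommGroup E] [InnerProductSpace ℝ E] {f : E →ₗ[ℝ] E} (hf : f.IsSymmetric)
    {x y : E} (hx : x ∈ ker f) (hy : y ∈ ker (id - f)) : ⟪x, y⟫ = 0 := by
  have hfy : f y = y := (sub_eq_zero.mp hy).symm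
  rw [← hfy, ← hf, show f x = 0 from hx, inner_zero_left]

end LinearMap

section Compression

variable {V : Type*} [NormedAddCommGroup V] [InnerProductSpace ℝ V] {W : Submodule ℝ V}
  {p : V →ₗ[ℝ] V} {R : W →ₗ[ℝ] W} {S : W →ₗ[ℝ] Wᗮ}

theorem isSymmetric_compression (hp : p.IsSymmetric)
    (hdec : ∀ x : W, p (x : V) = (R x : V) + (S x : V)) : R.IsSymmetric := by
  intro x y
  have h := hp x y
  rw [hdec x, hdec y, inner_add_left, inner_add_right,
    Submodule.inner_left_of_mem_orthogonal y.2 (S x).2,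
    Submodule.inner_right_of_mem_orthogonal x.2 (S y).2, add_zero, add_zero] at h
  simpa only [Submodule.coe_inner] using h

theorem compression_sq_eq_of_offDiag_eq_zero (hidem : p ∘ₗ p = p)
    (hdec : ∀ x : W, p (x : V) = (R x : V) + (S x : V)) {x : W} (hx : S x = 0) :
    R (R x) = R x := by
  have hpx : p x = R x := by simpa [hx] using hdec x
  have hfix : p (R x : V) = R x := by
    rw [← hpx, ← LinearMap.comp_apply, hidem]
  have hdiff : (R x : V) - R (R x) = S (R x) := by
    rw [← hfix, hdec]; abel
  have hzero : (R x : V) - R (R x) = 0 :=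
    Submodule.disjoint_def.mp W.orthogonal_disjoint _
      (W.sub_mem (R x).2 (R (R x)).2) (hdiff ▸ (S (R x)).2)
  exact Subtype.ext (sub_eq_zero.mp hzero).symm

theorem norm_sq_offDiag_eq_inner (hp : p.IsSymmetric) (hidem : p ∘ₗ p = p)
    (hdec : ∀ x : W, p (x : V) = (R x : V) + (S x : V)) (x : W) :
    ‖(S x : V)‖ ^ 2 = ⟪(R - R ∘ₗ R) x, x⟫ := by
  have hproj : ⟪p x, x⟫ = ‖p x‖ ^ 2 := by
    rw [← real_inner_self_eq_norm_sq, ← hp, ← LinearMap.comp_apply, hidem]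
  have hcompress : ⟪p x, x⟫ = ⟪(R x : V), x⟫ := by
    rw [hdec, inner_add_left, Submodule.inner_left_of_mem_orthogonal x.2 (S x).2, add_zero]
  have hpyth : ‖p x‖ ^ 2 = ‖(R x : V)‖ ^ 2 + ‖(S x : V)‖ ^ 2 := by
    rw [hdec, norm_add_sq_real, Submodule.inner_right_of_mem_orthogonal (R x).2 (S x).2,
      mul_zero, add_zero]
  have hRR : ‖(R x : V)‖ ^ 2 = ⟪(R (R x) : V), x⟫ := by
    rw [← real_inner_self_eq_norm_sq, ← Submodule.coe_inner, isSymmetric_compression hp hdec,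
      real_inner_comm, Submodule.coe_inner]
  rw [LinearMap.sub_apply, LinearMap.comp_apply, inner_sub_left, Submodule.coe_inner,
    Submodule.coe_inner]
  linarith

theorem ker_offDiag_eq (hp : p.IsSymmetric) (hidem : p ∘ₗ p = p)
    (hdec : ∀ x : W, p (x : V) = (R x : V) + (S x : V)) :
    LinearMap.ker S = LinearMap.ker (R - R ∘ₗ R) := by
  ext x
  refine ⟨fun hx => ?_, fun hx => ?_⟩
  · simp [compression_sq_eq_of_offDiag_eq_zero hidem hdec hx]
  · have h := norm_sq_offDiag_eq_inner hp hidem hdec x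
    rw [show (R - R ∘ₗ R) x = 0 from hx, inner_zero_left] at h
    simpa using h

end Compression

theorem stmt_3_general {V : Type*} [NormedAddCommGroup V] [InnerProductSpace ℝ V]
    (W : Submodule ℝ V)
    (p : V →ₗ[ℝ] V)
    (hsa : ∀ x y : V, ⟪p x, y⟫ = ⟪x, p y⟫)
    (hidem : p ∘ₗ p = p)
    (R : W →ₗ[ℝ] W) (S : W →ₗ[ℝ] Wᗮ)
    (hdecW : ∀ x : W, p (x : V) = (R x : V) + (S x : V)) :
    LinearMap.ker S = LinearMap.ker R ⊔ LinearMap.ker (LinearMap.id - R) ∧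
    LinearMap.ker R ⊓ LinearMap.ker (LinearMap.id - R) = ⊥ ∧
    (∀ x ∈ LinearMap.ker R, ∀ y ∈ LinearMap.ker (LinearMap.id - R), ⟪x, y⟫ = (0 : ℝ)) ∧
    Submodule.map R (LinearMap.ker S) = LinearMap.ker (LinearMap.id - R) := by
  rw [ker_offDiag_eq hsa hidem hdecW]
  exact ⟨R.ker_sub_comp_self_eq_sup, R.ker_inf_ker_id_sub_eq_bot,
    fun _ hx _ hy =>
      (isSymmetric_compression hsa hdecW).inner_eq_zero_of_mem_ker_of_mem_ker_id_sub hx hy,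
    R.map_ker_sub_comp_self⟩

/-- `ker S = ker R ⊕ ker(id − R)` (an orthogonal direct sum inside `W`) and
`R(ker S) = ker(id − R)`. -/
theorem stmt_3 {V : Type*} [NormedAddCommGroup V] [InnerProductSpace ℝ V]
    [FiniteDimensional ℝ V] (W : Submodule ℝ V)
    (p : V →ₗ[ℝ] V)
    (hsa : ∀ x y : V, ⟪p x, y⟫ = ⟪x, p y⟫)
    (hidem : p ∘ₗ p = p)
    (R : W →ₗ[ℝ] W) (S : W →ₗ[ℝ] Wᗮ) (T : Wᗮ →ₗ[ℝ] Wᗮ) (St : Wᗮ →ₗ[ℝ] W)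
    (hdecW : ∀ x : W, p (x : V) = (R x : V) + (S x : V))
    (hdecWp : ∀ ξ : Wᗮ, p (ξ : V) = (St ξ : V) + (T ξ : V))
    (hadj : ∀ (x : W) (ξ : Wᗮ), ⟪(S x : V), (ξ : V)⟫ = ⟪(x : V), (St ξ : V)⟫) :
    LinearMap.ker S = LinearMap.ker R ⊔ LinearMap.ker (LinearMap.id - R) ∧
    LinearMap.ker R ⊓ LinearMap.ker (LinearMap.id - R) = ⊥ ∧
    (∀ x ∈ LinearMap.ker R, ∀ y ∈ LinearMap.ker (LinearMap.id - R), ⟪x, y⟫ = (0 : ℝ)) ∧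
    Submodule.map R (LinearMap.ker S) = LinearMap.ker (LinearMap.id - R) :=
  stmt_3_general W p hsa hidem R S hdecW
end

section
/- Let V be a real inner product space, W ⊆ V a subspace, and π a self-adjoint idempotent on V with block components R : W → W, S : W → W⊥, T : W⊥ → W⊥. Then the subspace (S(W))⊥ ∩ W⊥ (the orthogonal complement of the image of S inside W⊥) is invariant under T, and on it T restricts to an orthogonal projection; consequently (S(W))⊥ ∩ W⊥ = (ker T) ⊕ ker(id − T), where moreover ker T and ker(id − T) are both contained in (S(W))⊥. -/
/-!
Write `π = [[R, Sᵗ], [S, T]]` along `V = W ⊕ Wᗮ`. Comparing `⟪π ξ, π η⟫ = ⟪π ξ, η⟫` for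
`ξ, η ∈ Wᗮ` gives `S Sᵗ = T (id − T)`. Since `(S(W))ᗮ ∩ Wᗮ = ker Sᵗ = ker (S Sᵗ)`, this
subspace is exactly `ker (T² − T)`, which is `T`-invariant and equal to `ker T ⊔ ker (id − T)`.
-/

open RealInnerProductSpace
open scoped InnerProductSpace

theorem LinearMap.mem_ker_sup_ker_id_sub_iff {R M : Type*} [Ring R] [AddCommGroup M]
    [Module R M] (f : M →ₗ[R] M) (x : M) :
    x ∈ ker f ⊔ ker (id - f) ↔ f (f x) = f x := by
  refine ⟨fun hx => ?_, fun hx => ?_⟩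
  · obtain ⟨a, ha, b, hb, rfl⟩ := Submodule.mem_sup.1 hx
    rw [mem_ker] at ha
    rw [mem_ker, sub_apply, id_apply, sub_eq_zero] at hb
    simp only [map_add, ha, ← hb, zero_add]
  · rw [← sub_add_cancel x (f x)]
    exact Submodule.add_mem_sup (by simp [hx]) (by simp [hx])

section AdjointPair

variable {𝕜 E F : Type*} [RCLike 𝕜] [NormedAddCommGroup E] [InnerProductSpace 𝕜 E]
  [NormedAddCommGroup F] [InnerProductSpace 𝕜 F] {S : E →ₗ[𝕜] F} {St : F →ₗ[𝕜] E}

theorem mem_orthogonal_range_iff_of_inner_eq (hadj : ∀ x y, ⟪S x, y⟫_𝕜 = ⟪x, St y⟫_𝕜)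
    (y : F) : y ∈ (LinearMap.range S)ᗮ ↔ St y = 0 := by
  simp only [Submodule.mem_orthogonal, LinearMap.mem_range, forall_exists_index,
    forall_apply_eq_imp_iff, hadj]
  exact ⟨fun h => inner_self_eq_zero.1 (h _), fun h x => by rw [h, inner_zero_right]⟩

theorem apply_eq_zero_iff_of_inner_eq (hadj : ∀ x y, ⟪S x, y⟫_𝕜 = ⟪x, St y⟫_𝕜) (y : F) :
    S (St y) = 0 ↔ St y = 0 := by
  refine ⟨fun h => inner_self_eq_zero (𝕜 := 𝕜).1 ?_, fun h => by rw [h, map_zero]⟩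
  rw [← hadj, h, inner_zero_left]

end AdjointPair

theorem LinearMap.IsSymmetric.inner_map_map_of_comp_self {𝕜 E : Type*} [RCLike 𝕜]
    [NormedAddCommGroup E] [InnerProductSpace 𝕜 E] {p : E →ₗ[𝕜] E} (hsa : p.IsSymmetric)
    (hidem : p ∘ₗ p = p) (x y : E) : ⟪p x, p y⟫_𝕜 = ⟪p x, y⟫_𝕜 := by
  rw [hsa x, ← LinearMap.comp_apply, hidem, hsa]

namespace ProjectionBlock

variable {V : Type*} [NormedAddCommGroup V] [InnerProductSpace ℝ V] {W : Submodule ℝ V}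
  {p : V →ₗ[ℝ] V} {T : Wᗮ →ₗ[ℝ] Wᗮ} {St : Wᗮ →ₗ[ℝ] W}

theorem inner_apply_eq_inner_T (hdec : ∀ ξ : Wᗮ, p (ξ : V) = (St ξ : V) + (T ξ : V))
    (ξ η : Wᗮ) : ⟪p ξ, η⟫ = ⟪(T ξ : V), η⟫ := by
  rw [hdec, inner_add_left, Submodule.inner_right_of_mem_orthogonal (St ξ).2 η.2, zero_add]

theorem T_isSymmetric (hsa : p.IsSymmetric)
    (hdec : ∀ ξ : Wᗮ, p (ξ : V) = (St ξ : V) + (T ξ : V)) : T.IsSymmetric := fun ξ η =>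
  calc ⟪(T ξ : V), η⟫ = ⟪p η, ξ⟫ := by rw [← inner_apply_eq_inner_T hdec, hsa, real_inner_comm]
    _ = ⟪(ξ : V), T η⟫ := by rw [inner_apply_eq_inner_T hdec, real_inner_comm]

theorem inner_St_St (hsa : p.IsSymmetric) (hidem : p ∘ₗ p = p)
    (hdec : ∀ ξ : Wᗮ, p (ξ : V) = (St ξ : V) + (T ξ : V)) (ξ η : Wᗮ) :
    ⟪(St ξ : V), St η⟫ = ⟪(T ξ : V), η⟫ - ⟪(T ξ : V), T η⟫ := by
  have h := hsa.inner_map_map_of_comp_self hidem ξ η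
  rw [inner_apply_eq_inner_T hdec, hdec, hdec, inner_add_left, inner_add_right,
    inner_add_right, Submodule.inner_right_of_mem_orthogonal (St ξ).2 (T η).2,
    Submodule.inner_left_of_mem_orthogonal (St η).2 (T ξ).2] at h
  linarith

theorem S_St_eq_T_sub_T_T (hsa : p.IsSymmetric) (hidem : p ∘ₗ p = p) {S : W →ₗ[ℝ] Wᗮ}
    (hdec : ∀ ξ : Wᗮ, p (ξ : V) = (St ξ : V) + (T ξ : V))
    (hadj : ∀ (x : W) (ξ : Wᗮ), ⟪(S x : V), (ξ : V)⟫ = ⟪(x : V), (St ξ : V)⟫) (ξ : Wᗮ) :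
    S (St ξ) = T ξ - T (T ξ) := by
  refine ext_inner_right ℝ fun η => ?_
  rw [inner_sub_left, Submodule.coe_inner, hadj, inner_St_St hsa hidem hdec,
    T_isSymmetric hsa hdec (T ξ)]
  rfl

theorem mem_orthogonal_range_S_iff (hsa : p.IsSymmetric) (hidem : p ∘ₗ p = p)
    {S : W →ₗ[ℝ] Wᗮ} (hdec : ∀ ξ : Wᗮ, p (ξ : V) = (St ξ : V) + (T ξ : V))
    (hadj : ∀ (x : W) (ξ : Wᗮ), ⟪(S x : V), (ξ : V)⟫ = ⟪(x : V), (St ξ : V)⟫) (ξ : Wᗮ) :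
    ξ ∈ (LinearMap.range S)ᗮ ↔ T (T ξ) = T ξ := by
  rw [mem_orthogonal_range_iff_of_inner_eq hadj, ← apply_eq_zero_iff_of_inner_eq hadj,
    S_St_eq_T_sub_T_T hsa hidem hdec hadj, sub_eq_zero, eq_comm]

end ProjectionBlock

open ProjectionBlock in
theorem stmt_4_general {V : Type*} [NormedAddCommGroup V] [InnerProductSpace ℝ V]
    (W : Submodule ℝ V)
    (p : V →ₗ[ℝ] V)
    (hsa : ∀ x y : V, ⟪p x, y⟫ = ⟪x, p y⟫)
    (hidem : p ∘ₗ p = p)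
    (S : W →ₗ[ℝ] Wᗮ) (T : Wᗮ →ₗ[ℝ] Wᗮ) (St : Wᗮ →ₗ[ℝ] W)
    (hdecWp : ∀ ξ : Wᗮ, p (ξ : V) = (St ξ : V) + (T ξ : V))
    (hadj : ∀ (x : W) (ξ : Wᗮ), ⟪(S x : V), (ξ : V)⟫ = ⟪(x : V), (St ξ : V)⟫) :
    (∀ ξ ∈ (LinearMap.range S)ᗮ, T ξ ∈ (LinearMap.range S)ᗮ) ∧
    (∀ ξ ∈ (LinearMap.range S)ᗮ, T (T ξ) = T ξ) ∧
    (∀ ξ ∈ (LinearMap.range S)ᗮ, ∀ η ∈ (LinearMap.range S)ᗮ, ⟪T ξ, η⟫ = ⟪ξ, T η⟫) ∧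
    (LinearMap.range S)ᗮ = LinearMap.ker T ⊔ LinearMap.ker (LinearMap.id - T) ∧
    LinearMap.ker T ≤ (LinearMap.range S)ᗮ ∧
    LinearMap.ker (LinearMap.id - T) ≤ (LinearMap.range S)ᗮ := by
  have hmem := mem_orthogonal_range_S_iff hsa hidem hdecWp hadj
  have hsplit : (LinearMap.range S)ᗮ = LinearMap.ker T ⊔ LinearMap.ker (LinearMap.id - T) := by
    ext ξ
    rw [hmem, LinearMap.mem_ker_sup_ker_id_sub_iff]
  refine ⟨fun ξ hξ => (hmem _).2 (congrArg T ((hmem ξ).1 hξ)), fun ξ hξ => (hmem ξ).1 hξ,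
    fun ξ _ η _ => T_isSymmetric hsa hdecWp ξ η, hsplit, ?_, ?_⟩
  · exact hsplit ▸ le_sup_left
  · exact hsplit ▸ le_sup_right

/-- The orthogonal complement of `S(W)` inside `Wᗮ` is `T`-invariant, `T` restricts to an
orthogonal projection on it, and it splits as `ker T ⊕ ker(id − T)`, with both kernels
contained in `(S(W))ᗮ`. -/
theorem stmt_4 {V : Type*} [NormedAddCommGroup V] [InnerProductSpace ℝ V]
    [FiniteDimensional ℝ V] (W : Submodule ℝ V)
    (p : V →ₗ[ℝ] V)
    (hsa : ∀ x y : V, ⟪p x, y⟫ = ⟪x, p y⟫)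
    (hidem : p ∘ₗ p = p)
    (R : W →ₗ[ℝ] W) (S : W →ₗ[ℝ] Wᗮ) (T : Wᗮ →ₗ[ℝ] Wᗮ) (St : Wᗮ →ₗ[ℝ] W)
    (hdecW : ∀ x : W, p (x : V) = (R x : V) + (S x : V))
    (hdecWp : ∀ ξ : Wᗮ, p (ξ : V) = (St ξ : V) + (T ξ : V))
    (hadj : ∀ (x : W) (ξ : Wᗮ), ⟪(S x : V), (ξ : V)⟫ = ⟪(x : V), (St ξ : V)⟫) :
    (∀ ξ ∈ (LinearMap.range S)ᗮ, T ξ ∈ (LinearMap.range S)ᗮ) ∧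
    (∀ ξ ∈ (LinearMap.range S)ᗮ, T (T ξ) = T ξ) ∧
    (∀ ξ ∈ (LinearMap.range S)ᗮ, ∀ η ∈ (LinearMap.range S)ᗮ, ⟪T ξ, η⟫ = ⟪ξ, T η⟫) ∧
    (LinearMap.range S)ᗮ = LinearMap.ker T ⊔ LinearMap.ker (LinearMap.id - T) ∧
    LinearMap.ker T ≤ (LinearMap.range S)ᗮ ∧
    LinearMap.ker (LinearMap.id - T) ≤ (LinearMap.range S)ᗮ :=
  stmt_4_general W p hsa hidem S T St hdecWp hadj
end

section
/- Let k₁, …, k_ℓ be positive reals, k := (∑ᵢ 1/kᵢ)⁻¹, aᵢ := √(k/kᵢ), and let V ⊆ (ℝ^{n+1})^ℓ be an (n+1)-dimensional subspace such that each coordinate projection πᵢ restricted to V is a similarity of ratio aᵢ (i.e. ‖πᵢ v‖ = aᵢ‖v‖ for all v ∈ V). Then there exist orthogonal linear maps T₁, …, T_ℓ ∈ O(n+1) such that V = { (a₁T₁(x), …, a_ℓT_ℓ(x)) : x ∈ ℝ^{n+1} }. -/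
/-!
Since `aᵢ > 0`, dividing the `i`-th coordinate projection by `aᵢ` gives a linear isometry `Sᵢ`
from `V` into `ℝⁿ⁺¹`, which is onto because `dim V = n + 1`. Identifying `V` with `ℝⁿ⁺¹` by any
isometry `ψ`, the maps `Tᵢ = Sᵢ ∘ ψ⁻¹` parametrize `V` as `x ↦ (aᵢ Tᵢ x)ᵢ`.
-/

open Module

theorem sqrt_div_inv_sum_one_div_pos {ι : Type*} [Fintype ι] {k : ι → ℝ} (hk : ∀ i, 0 < k i)
    (i : ι) : 0 < √((∑ j, 1 / k j)⁻¹ / k i) := by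
  have hsum : 0 < ∑ j, 1 / k j :=
    (one_div_pos.mpr (hk i)).trans_le <|
      Finset.single_le_sum (fun j _ => (one_div_pos.mpr (hk j)).le) (Finset.mem_univ i)
  exact Real.sqrt_pos.mpr (div_pos (inv_pos.mpr hsum) (hk i))

theorem LinearMap.exists_linearIsometry_of_norm_eq_mul {𝕜 E F : Type*} [NormedField 𝕜]
    [SeminormedAddCommGroup E] [NormedSpace 𝕜 E] [SeminormedAddCommGroup F] [NormedSpace 𝕜 F]
    (f : E →ₗ[𝕜] F) {c : 𝕜} (hc : c ≠ 0) (h : ∀ x, ‖f x‖ = ‖c‖ * ‖x‖) :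
    ∃ g : E →ₗᵢ[𝕜] F, ∀ x, f x = c • g x :=
  ⟨⟨c⁻¹ • f, fun x => by
      rw [LinearMap.smul_apply, norm_smul, h, norm_inv,
        inv_mul_cancel_left₀ (norm_ne_zero_iff.mpr hc)]⟩,
    fun x => by simp [smul_smul, mul_inv_cancel₀ hc]⟩

section

variable {𝕜 ι F : Type*} {E : ι → Type*} [NormedField 𝕜] [Fintype ι]
  [∀ i, SeminormedAddCommGroup (E i)] [∀ i, NormedSpace 𝕜 (E i)]
  [SeminormedAddCommGroup F] [NormedSpace 𝕜 F] {p : ENNReal} [Fact (1 ≤ p)]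

theorem Submodule.mem_iff_exists_forall_eq_smul {V : Submodule 𝕜 (PiLp p E)} (a : ι → 𝕜)
    (Φ : ∀ i, V ≃ₗᵢ[𝕜] E i) (hΦ : ∀ i (v : V), (v : PiLp p E) i = a i • Φ i v)
    (ψ : V ≃ₗᵢ[𝕜] F) (y : PiLp p E) :
    y ∈ V ↔ ∃ x : F, ∀ i, y i = a i • (ψ.symm.trans (Φ i)) x := by
  constructor
  · intro hy
    exact ⟨ψ ⟨y, hy⟩, fun i => by simpa using hΦ i ⟨y, hy⟩⟩
  · rintro ⟨x, hx⟩
    have : y = ψ.symm x := PiLp.ext fun i => by simpa [hΦ] using hx i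
    exact this ▸ (ψ.symm x).2

end

/-- If each coordinate projection restricted to the `(n+1)`-dimensional subspace `V` is a
similarity of ratio `aᵢ`, then there are orthogonal maps `Tᵢ ∈ O(n+1)` with
`V = {(a₁T₁x, …, a_ℓT_ℓx) : x ∈ ℝⁿ⁺¹}`. -/
theorem stmt_9 {ℓ n : ℕ} (k : Fin ℓ → ℝ) (hk : ∀ i, 0 < k i)
    (kk : ℝ) (hkk : kk = (∑ i, 1 / k i)⁻¹)
    (a : Fin ℓ → ℝ) (ha : ∀ i, a i = Real.sqrt (kk / k i))
    (V : Submodule ℝ (PiLp 2 (fun _ : Fin ℓ => EuclideanSpace ℝ (Fin (n + 1)))))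
    (hdim : Module.finrank ℝ V = n + 1)
    (hsim : ∀ x ∈ V, ∀ i, ‖x i‖ = a i * ‖x‖) :
    ∃ T : Fin ℓ → (EuclideanSpace ℝ (Fin (n + 1)) ≃ₗᵢ[ℝ] EuclideanSpace ℝ (Fin (n + 1))),
      ∀ y : PiLp 2 (fun _ : Fin ℓ => EuclideanSpace ℝ (Fin (n + 1))),
        y ∈ V ↔ ∃ x : EuclideanSpace ℝ (Fin (n + 1)), ∀ i, y i = a i • T i x := by
  have ha_pos (i : Fin ℓ) : 0 < a i := ha i ▸ hkk ▸ sqrt_div_inv_sum_one_div_pos hk i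
  have hproj (i : Fin ℓ) : ∃ S : V →ₗᵢ[ℝ] EuclideanSpace ℝ (Fin (n + 1)),
      ∀ v : V, v.1 i = a i • S v :=
    ((PiLp.projₗ 2 _ i).comp V.subtype).exists_linearIsometry_of_norm_eq_mul (ha_pos i).ne'
      fun v => by
        rw [Real.norm_of_nonneg (ha_pos i).le]
        exact hsim v v.2 i
  choose S hS using hproj
  have hrank : finrank ℝ V = finrank ℝ (EuclideanSpace ℝ (Fin (n + 1))) := by
    rw [hdim, finrank_euclideanSpace_fin]
  let ψ := ((stdOrthonormalBasis ℝ V).reindex (finCongr hdim)).repr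
  exact ⟨fun i => ψ.symm.trans ((S i).toLinearIsometryEquiv hrank),
    V.mem_iff_exists_forall_eq_smul a _ hS ψ⟩
end

section
/- Let V₁, …, V_ℓ be real inner product spaces, W a subspace of the product, and Rᵢ, Sᵢ the blocks of the factor projections πᵢ relative to W ⊕ W⊥. Suppose k₁, …, k_ℓ are nonzero reals such that kᵢ Rᵢ = kⱼ Rⱼ for all i, j, and R₁ ≠ 0. Then with Mᵢ := ∏_{j≠i} kⱼ and λ := ∑ᵢ Mᵢ, one has λ ≠ 0 and Rᵢ = (Mᵢ/λ) · id_W for each i. -/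
/-!
The coordinate projections sum to the identity, so for `x ∈ W` the vector `x - ∑ Rᵢ x` equals
`∑ Sᵢ x` and lies in `W ∩ W⊥ = 0`; hence `∑ Rᵢ = id_W`. Let `c` be the common value of `kᵢ Rᵢ`
and `P = ∏ kⱼ = kᵢ Mᵢ`. Then `P Rᵢ = Mᵢ c`, and summing over `i` gives `P · id_W = λ c`. As
`R₁ ≠ 0` forces `id_W ≠ 0`, this gives `λ ≠ 0`, `c = (P/λ) id_W` and `Rᵢ = (Mᵢ/λ) id_W`.
-/

open Finset

theorem PiLp.sum_eq_self_of_apply_eq_ite {ι : Type*} [Fintype ι] [DecidableEq ι] {q : ENNReal}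
    {β : ι → Type*} [∀ i, NormedAddCommGroup (β i)] {x : PiLp q β} {y : ι → PiLp q β}
    (hy : ∀ i j, y i j = if j = i then x j else 0) : ∑ i, y i = x := by
  ext j
  rw [WithLp.ofLp_sum, Finset.sum_apply]
  simp [hy]

section Compression

variable {𝕜 E : Type*} [RCLike 𝕜] [NormedAddCommGroup E] [InnerProductSpace 𝕜 E]
  {K : Submodule 𝕜 E}

theorem Submodule.eq_of_add_eq_of_mem_orthogonal {x a b : E} (hx : x ∈ K) (ha : a ∈ K)
    (hb : b ∈ Kᗮ) (hab : a + b = x) : a = x := by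
  have hb_mem : b ∈ K := by
    rw [← add_sub_cancel_left a b, hab]
    exact K.sub_mem hx ha
  rw [← hab, Submodule.disjoint_def.mp K.orthogonal_disjoint b hb_mem hb, add_zero]

theorem Submodule.sum_compressions_eq_id {ι : Type*} [Fintype ι] (R : ι → K →ₗ[𝕜] K)
    (S : ι → K →ₗ[𝕜] Kᗮ) (h : ∀ x : K, ∑ i, ((R i x : E) + S i x) = x) :
    ∑ i, R i = LinearMap.id := by
  ext x
  rw [LinearMap.sum_apply, Submodule.coe_sum]
  refine K.eq_of_add_eq_of_mem_orthogonal x.2 (K.sum_mem fun i _ => (R i x).2)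
    (Kᗮ.sum_mem (t := univ) fun i _ => (S i x).2) ?_
  rw [← sum_add_distrib, h, LinearMap.id_apply]

end Compression

theorem eq_div_smul_of_smul_eq {ι K A : Type*} [Fintype ι] [DecidableEq ι] [Field K]
    [AddCommGroup A] [Module K A] {k : ι → K} (hk : ∀ i, k i ≠ 0) {R : ι → A} {c a : A}
    (hc : ∀ i, k i • R i = c) (hsum : ∑ i, R i = a) (ha : a ≠ 0) :
    (∑ i, ∏ j ∈ univ.erase i, k j) ≠ 0 ∧
      ∀ i, R i = ((∏ j ∈ univ.erase i, k j) / ∑ i, ∏ j ∈ univ.erase i, k j) • a := by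
  set P := ∏ j, k j
  set M := fun i => ∏ j ∈ univ.erase i, k j
  have hP : P ≠ 0 := prod_ne_zero_iff.mpr fun i _ => hk i
  have hPR : ∀ i, P • R i = M i • c := fun i => by
    rw [← hc i, smul_smul, prod_erase_mul univ k (mem_univ i)]
  have hPa : P • a = (∑ i, M i) • c := by
    rw [← hsum, smul_sum, sum_smul]
    exact sum_congr rfl fun i _ => hPR i
  have hlam : ∑ i, M i ≠ 0 := fun h => ha <| by
    rwa [h, zero_smul, smul_eq_zero_iff_right hP] at hPa
  refine ⟨hlam, fun i => ?_⟩
  have hc_eq : c = (P / ∑ i, M i) • a := by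
    rw [div_eq_inv_mul, mul_smul, hPa, inv_smul_smul₀ hlam]
  rw [← inv_smul_smul₀ hP (R i), hPR i, hc_eq, smul_smul, smul_smul]
  congr 1
  field_simp
  rfl

theorem stmt_12_general {ℓ : ℕ} (V : Fin ℓ → Type*)
    [∀ i, NormedAddCommGroup (V i)] [∀ i, InnerProductSpace ℝ (V i)]
    (p : Fin ℓ → (PiLp 2 V →ₗ[ℝ] PiLp 2 V))
    (hp : ∀ (i : Fin ℓ) (x : PiLp 2 V) (j : Fin ℓ), p i x j = if j = i then x j else 0)
    (W : Submodule ℝ (PiLp 2 V))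
    (R : Fin ℓ → (W →ₗ[ℝ] W)) (S : Fin ℓ → (W →ₗ[ℝ] Wᗮ))
    (hdecW : ∀ (i : Fin ℓ) (x : W),
      p i (x : PiLp 2 V) = (R i x : PiLp 2 V) + (S i x : PiLp 2 V))
    (k : Fin ℓ → ℝ) (hk : ∀ i, k i ≠ 0)
    (hkR : ∀ i j, k i • R i = k j • R j)
    (i₀ : Fin ℓ) (hR₀ : R i₀ ≠ 0)
    (M : Fin ℓ → ℝ) (hM : ∀ i, M i = ∏ j ∈ Finset.univ.erase i, k j)
    (lam : ℝ) (hlam : lam = ∑ i, M i) :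
    lam ≠ 0 ∧ ∀ i, R i = (M i / lam) • LinearMap.id := by
  have hsum : ∑ i, R i = LinearMap.id := W.sum_compressions_eq_id R S fun x => by
    simp_rw [← hdecW]
    exact PiLp.sum_eq_self_of_apply_eq_ite fun i => hp i x
  have hid : (LinearMap.id : W →ₗ[ℝ] W) ≠ 0 := fun h =>
    hR₀ (by rw [← LinearMap.comp_id (R i₀), h, LinearMap.comp_zero])
  obtain rfl : M = fun i => ∏ j ∈ Finset.univ.erase i, k j := funext hM
  subst hlam
  exact eq_div_smul_of_smul_eq hk (fun i => hkR i i₀) hsum hid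

/-- If `kᵢ Rᵢ = kⱼ Rⱼ` for all `i, j` with nonzero `kᵢ` and some `Rᵢ₀ ≠ 0`, then
`λ = ∑ Mᵢ ≠ 0` (where `Mᵢ = ∏_{j≠i} kⱼ`) and `Rᵢ = (Mᵢ/λ)·id` for each `i`. -/
theorem stmt_12 {ℓ : ℕ} (V : Fin ℓ → Type*)
    [∀ i, NormedAddCommGroup (V i)] [∀ i, InnerProductSpace ℝ (V i)]
    (p : Fin ℓ → (PiLp 2 V →ₗ[ℝ] PiLp 2 V))
    (hp : ∀ (i : Fin ℓ) (x : PiLp 2 V) (j : Fin ℓ), p i x j = if j = i then x j else 0)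
    (W : Submodule ℝ (PiLp 2 V))
    (R : Fin ℓ → (W →ₗ[ℝ] W)) (S : Fin ℓ → (W →ₗ[ℝ] Wᗮ))
    (T : Fin ℓ → (Wᗮ →ₗ[ℝ] Wᗮ)) (St : Fin ℓ → (Wᗮ →ₗ[ℝ] W))
    (hdecW : ∀ (i : Fin ℓ) (x : W),
      p i (x : PiLp 2 V) = (R i x : PiLp 2 V) + (S i x : PiLp 2 V))
    (hdecWp : ∀ (i : Fin ℓ) (ξ : Wᗮ),
      p i (ξ : PiLp 2 V) = (St i ξ : PiLp 2 V) + (T i ξ : PiLp 2 V))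
    (k : Fin ℓ → ℝ) (hk : ∀ i, k i ≠ 0)
    (hkR : ∀ i j, k i • R i = k j • R j)
    (i₀ : Fin ℓ) (hR₀ : R i₀ ≠ 0)
    (M : Fin ℓ → ℝ) (hM : ∀ i, M i = ∏ j ∈ Finset.univ.erase i, k j)
    (lam : ℝ) (hlam : lam = ∑ i, M i) :
    lam ≠ 0 ∧ ∀ i, R i = (M i / lam) • LinearMap.id :=
  stmt_12_general V p hp W R S hdecW k hk hkR i₀ hR₀ M hM lam hlam
end

section
/- Let M, N be semi-Riemannian manifolds, P : TN → TN a parallel (1,1)-tensor field on N (∇̄P = 0), and f : M → N an isometric immersion with second fundamental form α and shape operator A. Define R : TM → TM, S : TM → T⊥M by the tangent/normal decomposition P f_* X = f_* R X + S X. Then for all X, Y ∈ Γ(TM): (∇_X R)Y = A_{S Y} X + Sᵗ α(X, Y), where Sᵗ is the pointwise adjoint of S. -/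
/-! Differentiate `P f_* Y = f_* R Y + S Y` along `X` in two ways. Using `∇̄P = 0` first and then
the Gauss formula for `f_* ∇_X Y` and the block decomposition of `P`, the tangent part of
`∇̄_X (P f_* Y)` is `R ∇_X Y + Sᵗ α(X, Y)`. Differentiating the right-hand side directly, by the
Gauss formula for `f_* R Y` and the Weingarten formula for `S Y`, the tangent part is
`∇_X (R Y) - A_{S Y} X`. Since `TN = f_* TM ⊕ T⊥M`, the two tangent parts agree. -/

theorem tangent_eq_of_add_eq {V W E : Type*} [AddCommGroup V] [Module ℝ V]
    [AddCommGroup W] [Module ℝ W] [AddCommGroup E] [Module ℝ E]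
    {F : V →ₗ[ℝ] E} {J : W →ₗ[ℝ] E}
    (hindep : ∀ (v : V) (ξ : W), F v + J ξ = 0 → v = 0 ∧ ξ = 0)
    {v v' : V} {ξ ξ' : W} (h : F v + J ξ = F v' + J ξ') : v = v' := by
  refine sub_eq_zero.mp (hindep (v - v') (ξ - ξ') ?_).1
  rw [map_sub, map_sub, sub_add_sub_comm, h, sub_self]

section Immersion

variable {TM NM E : Type*} [AddCommGroup TM] [Module ℝ TM] [AddCommGroup NM] [Module ℝ NM]
  [AddCommGroup E] [Module ℝ E]
  {F : TM →ₗ[ℝ] E} {J : NM →ₗ[ℝ] E}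
  {nablaM : TM → TM → TM} {nablaPerp : TM → NM → NM} {nablaBar : TM → E → E}
  {alpha : TM → TM → NM} {A : NM → TM → TM} {P : E →ₗ[ℝ] E}
  {R : TM →ₗ[ℝ] TM} {S : TM →ₗ[ℝ] NM} {St : NM →ₗ[ℝ] TM} {T : NM →ₗ[ℝ] NM}

theorem nablaBar_P_F_eq_via_parallel
    (hPpar : ∀ X (Z : E), nablaBar X (P Z) = P (nablaBar X Z))
    (hPF : ∀ X, P (F X) = F (R X) + J (S X))
    (hPJ : ∀ ξ, P (J ξ) = F (St ξ) + J (T ξ))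
    (hGauss : ∀ X Y, nablaBar X (F Y) = F (nablaM X Y) + J (alpha X Y)) (X Y : TM) :
    nablaBar X (P (F Y))
      = F (R (nablaM X Y) + St (alpha X Y)) + J (S (nablaM X Y) + T (alpha X Y)) := by
  rw [hPpar, hGauss, map_add, hPF, hPJ, map_add, map_add]
  abel

theorem nablaBar_P_F_eq_via_gauss_weingarten
    (hbar_add : ∀ X (Z Z' : E), nablaBar X (Z + Z') = nablaBar X Z + nablaBar X Z')
    (hPF : ∀ X, P (F X) = F (R X) + J (S X))
    (hGauss : ∀ X Y, nablaBar X (F Y) = F (nablaM X Y) + J (alpha X Y))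
    (hWein : ∀ X ξ, nablaBar X (J ξ) = -F (A ξ X) + J (nablaPerp X ξ)) (X Y : TM) :
    nablaBar X (P (F Y))
      = F (nablaM X (R Y) - A (S Y) X) + J (alpha X (R Y) + nablaPerp X (S Y)) := by
  rw [hPF, hbar_add, hGauss, hWein, map_sub, map_add]
  abel

end Immersion

/- `TM`, `NM`, `E` model the tangent, normal and ambient (pulled-back) bundles of sections,
`F = f_*`, `J` the inclusion of the normal bundle, and `St` the adjoint `Sᵗ`. -/
theorem stmt_15_general {TM NM E : Type*}
    [AddCommGroup TM] [Module ℝ TM] [AddCommGroup NM] [Module ℝ NM]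
    [AddCommGroup E] [Module ℝ E]
    (F : TM →ₗ[ℝ] E) (J : NM →ₗ[ℝ] E)
    (hindep : ∀ (v : TM) (ξ : NM), F v + J ξ = 0 → v = 0 ∧ ξ = 0)
    (nablaM : TM → TM → TM) (nablaPerp : TM → NM → NM) (nablaBar : TM → E → E)
    (hbar_add : ∀ X (Z Z' : E), nablaBar X (Z + Z') = nablaBar X Z + nablaBar X Z')
    (alpha : TM → TM → NM) (A : NM → TM → TM)
    (P : E →ₗ[ℝ] E)
    (hPpar : ∀ X (Z : E), nablaBar X (P Z) = P (nablaBar X Z))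
    (R : TM →ₗ[ℝ] TM) (S : TM →ₗ[ℝ] NM) (St : NM →ₗ[ℝ] TM) (T : NM →ₗ[ℝ] NM)
    (hPF : ∀ X, P (F X) = F (R X) + J (S X))
    (hPJ : ∀ ξ, P (J ξ) = F (St ξ) + J (T ξ))
    (hGauss : ∀ X Y, nablaBar X (F Y) = F (nablaM X Y) + J (alpha X Y))
    (hWein : ∀ X ξ, nablaBar X (J ξ) = -F (A ξ X) + J (nablaPerp X ξ)) :
    ∀ X Y, nablaM X (R Y) - R (nablaM X Y) = A (S Y) X + St (alpha X Y) := by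
  intro X Y
  have htangent : nablaM X (R Y) - A (S Y) X = R (nablaM X Y) + St (alpha X Y) :=
    tangent_eq_of_add_eq hindep <|
      (nablaBar_P_F_eq_via_gauss_weingarten hbar_add hPF hGauss hWein X Y).symm.trans
        (nablaBar_P_F_eq_via_parallel hPpar hPF hPJ hGauss X Y)
  rw [sub_eq_iff_eq_add] at htangent ⊢
  rw [htangent]
  abel

/-- For a parallel self-adjoint `(1,1)`-tensor `P` along an isometric immersion, with
tangent/normal blocks `P f_* = f_* R + S` and `P|_⊥ = f_* Sᵗ + T`, one has
`(∇_X R)Y = A_{S Y} X + Sᵗ α(X, Y)`.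
Here `TM`, `NM`, `E` model the tangent, normal and ambient (pulled-back) bundles of
sections, `F = f_*`, `J` the inclusion of the normal bundle, `nablaM`/`nablaPerp`/`nablaBar`
the Levi-Civita, normal and ambient connections, `alpha` the second fundamental form and
`A` the shape operator; `gTM`/`gNM` are the (possibly indefinite) metrics. -/
theorem stmt_15 {TM NM E : Type*}
    [AddCommGroup TM] [Module ℝ TM] [AddCommGroup NM] [Module ℝ NM]
    [AddCommGroup E] [Module ℝ E]
    (gTM : TM →ₗ[ℝ] TM →ₗ[ℝ] ℝ) (gNM : NM →ₗ[ℝ] NM →ₗ[ℝ] ℝ)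
    (F : TM →ₗ[ℝ] E) (J : NM →ₗ[ℝ] E)
    (hindep : ∀ (v : TM) (ξ : NM), F v + J ξ = 0 → v = 0 ∧ ξ = 0)
    (nablaM : TM → TM → TM) (nablaPerp : TM → NM → NM) (nablaBar : TM → E → E)
    (hbar_add : ∀ X (Z Z' : E), nablaBar X (Z + Z') = nablaBar X Z + nablaBar X Z')
    (alpha : TM → TM → NM) (A : NM → TM → TM)
    (hshape : ∀ X Y ξ, gNM (alpha X Y) ξ = gTM (A ξ X) Y)
    (P : E →ₗ[ℝ] E)
    (hPpar : ∀ X (Z : E), nablaBar X (P Z) = P (nablaBar X Z))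
    (R : TM →ₗ[ℝ] TM) (S : TM →ₗ[ℝ] NM) (St : NM →ₗ[ℝ] TM) (T : NM →ₗ[ℝ] NM)
    (hPF : ∀ X, P (F X) = F (R X) + J (S X))
    (hPJ : ∀ ξ, P (J ξ) = F (St ξ) + J (T ξ))
    (hSt : ∀ X ξ, gNM (S X) ξ = gTM X (St ξ))
    (hGauss : ∀ X Y, nablaBar X (F Y) = F (nablaM X Y) + J (alpha X Y))
    (hWein : ∀ X ξ, nablaBar X (J ξ) = -F (A ξ X) + J (nablaPerp X ξ)) :
    ∀ X Y, nablaM X (R Y) - R (nablaM X Y) = A (S Y) X + St (alpha X Y) :=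
  stmt_15_general F J hindep nablaM nablaPerp nablaBar hbar_add alpha A P hPpar R S St T hPF hPJ
    hGauss hWein
end

section
/- Let M, N be semi-Riemannian manifolds, P a parallel self-adjoint (1,1)-tensor on N, f : M → N an isometric immersion, and decompose P f_* X = f_* R X + S X (X tangent) and P ξ = f_* Sᵗ ξ + T ξ (ξ normal). Then for all X ∈ Γ(TM) and ξ ∈ Γ(T⊥M): (∇_X S)Y = T α(X,Y) − α(X, R Y) and (∇_X T)ξ = −S A_ξ X − α(X, Sᵗ ξ), where (∇_X S)Y := ∇⊥_X(SY) − S ∇_X Y and (∇_X T)ξ := ∇⊥_X(Tξ) − T ∇⊥_X ξ. -/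
/-!
Differentiate `P (f_* Y) = f_* (R Y) + S Y` and `P ξ = f_* (Sᵗ ξ) + T ξ` along `X`. Since `P` is
parallel, the left-hand sides give `P` applied to the Gauss and Weingarten decompositions of
`∇̄_X (f_* Y)` and `∇̄_X ξ`, while the right-hand sides are decomposed by the Gauss and Weingarten
formulas directly. Comparing normal components yields both identities.
-/

section ImmersionBlocks

variable {TM NM E : Type*} [AddCommGroup TM] [Module ℝ TM] [AddCommGroup NM] [Module ℝ NM]
  [AddCommGroup E] [Module ℝ E] (F : TM →ₗ[ℝ] E) (J : NM →ₗ[ℝ] E)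

theorem normal_eq_of_add_eq_add (hindep : ∀ (v : TM) (ξ : NM), F v + J ξ = 0 → v = 0 ∧ ξ = 0)
    {a c : TM} {b d : NM} (h : F a + J b = F c + J d) : b = d := by
  have h0 : F (a - c) + J (b - d) = 0 := by
    rw [map_sub, map_sub, ← sub_eq_zero.mpr h]
    abel
  exact sub_eq_zero.mp (hindep _ _ h0).2

theorem blocks_apply_add (P : E →ₗ[ℝ] E) (R : TM →ₗ[ℝ] TM) (S : TM →ₗ[ℝ] NM)
    (St : NM →ₗ[ℝ] TM) (T : NM →ₗ[ℝ] NM)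
    (hPF : ∀ X, P (F X) = F (R X) + J (S X)) (hPJ : ∀ ξ, P (J ξ) = F (St ξ) + J (T ξ))
    (v : TM) (ξ : NM) : P (F v + J ξ) = F (R v + St ξ) + J (S v + T ξ) := by
  rw [map_add, hPF, hPJ, map_add, map_add]
  abel

theorem gauss_weingarten_apply_add (nablaM : TM → TM → TM) (nablaPerp : TM → NM → NM)
    (nablaBar : TM → E → E) (alpha : TM → TM → NM) (A : NM → TM → TM)
    (hbar_add : ∀ X (Z Z' : E), nablaBar X (Z + Z') = nablaBar X Z + nablaBar X Z')
    (hGauss : ∀ X Y, nablaBar X (F Y) = F (nablaM X Y) + J (alpha X Y))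
    (hWein : ∀ X ξ, nablaBar X (J ξ) = -F (A ξ X) + J (nablaPerp X ξ)) (X Y : TM) (η : NM) :
    nablaBar X (F Y + J η) = F (nablaM X Y - A η X) + J (alpha X Y + nablaPerp X η) := by
  rw [hbar_add, hGauss, hWein, map_sub, map_add]
  abel

end ImmersionBlocks

theorem stmt_16_general {TM NM E : Type*}
    [AddCommGroup TM] [Module ℝ TM] [AddCommGroup NM] [Module ℝ NM]
    [AddCommGroup E] [Module ℝ E]
    (F : TM →ₗ[ℝ] E) (J : NM →ₗ[ℝ] E)
    (hindep : ∀ (v : TM) (ξ : NM), F v + J ξ = 0 → v = 0 ∧ ξ = 0)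
    (nablaM : TM → TM → TM) (nablaPerp : TM → NM → NM) (nablaBar : TM → E → E)
    (hbar_add : ∀ X (Z Z' : E), nablaBar X (Z + Z') = nablaBar X Z + nablaBar X Z')
    (alpha : TM → TM → NM) (A : NM → TM → TM)
    (P : E →ₗ[ℝ] E)
    (hPpar : ∀ X (Z : E), nablaBar X (P Z) = P (nablaBar X Z))
    (R : TM →ₗ[ℝ] TM) (S : TM →ₗ[ℝ] NM) (St : NM →ₗ[ℝ] TM) (T : NM →ₗ[ℝ] NM)
    (hPF : ∀ X, P (F X) = F (R X) + J (S X))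
    (hPJ : ∀ ξ, P (J ξ) = F (St ξ) + J (T ξ))
    (hGauss : ∀ X Y, nablaBar X (F Y) = F (nablaM X Y) + J (alpha X Y))
    (hWein : ∀ X ξ, nablaBar X (J ξ) = -F (A ξ X) + J (nablaPerp X ξ)) :
    (∀ X Y, nablaPerp X (S Y) - S (nablaM X Y) = T (alpha X Y) - alpha X (R Y)) ∧
    (∀ X ξ, nablaPerp X (T ξ) - T (nablaPerp X ξ) = -S (A ξ X) - alpha X (St ξ)) := by
  have hP := blocks_apply_add F J P R S St T hPF hPJ
  have hBar :=
    gauss_weingarten_apply_add F J nablaM nablaPerp nablaBar alpha A hbar_add hGauss hWein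
  refine ⟨fun X Y => ?_, fun X ξ => ?_⟩
  · have h := hPpar X (F Y)
    rw [hPF, hBar, hGauss, hP] at h
    linear_combination (norm := module) normal_eq_of_add_eq_add F J hindep h
  · have h := hPpar X (J ξ)
    rw [hPJ, hBar, hWein, ← map_neg, hP, map_neg S] at h
    linear_combination (norm := module) normal_eq_of_add_eq_add F J hindep h

/-- For a parallel self-adjoint `(1,1)`-tensor `P` along an isometric immersion, with
blocks `P f_* = f_* R + S` and `P|_⊥ = f_* Sᵗ + T`, one has
`(∇_X S)Y = T α(X,Y) − α(X, R Y)` and `(∇_X T)ξ = −S A_ξ X − α(X, Sᵗ ξ)`. -/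
theorem stmt_16 {TM NM E : Type*}
    [AddCommGroup TM] [Module ℝ TM] [AddCommGroup NM] [Module ℝ NM]
    [AddCommGroup E] [Module ℝ E]
    (gTM : TM →ₗ[ℝ] TM →ₗ[ℝ] ℝ) (gNM : NM →ₗ[ℝ] NM →ₗ[ℝ] ℝ)
    (gE : E →ₗ[ℝ] E →ₗ[ℝ] ℝ)
    (F : TM →ₗ[ℝ] E) (J : NM →ₗ[ℝ] E)
    (hindep : ∀ (v : TM) (ξ : NM), F v + J ξ = 0 → v = 0 ∧ ξ = 0)
    (nablaM : TM → TM → TM) (nablaPerp : TM → NM → NM) (nablaBar : TM → E → E)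
    (hbar_add : ∀ X (Z Z' : E), nablaBar X (Z + Z') = nablaBar X Z + nablaBar X Z')
    (alpha : TM → TM → NM) (A : NM → TM → TM)
    (hshape : ∀ X Y ξ, gNM (alpha X Y) ξ = gTM (A ξ X) Y)
    (P : E →ₗ[ℝ] E)
    (hPsa : ∀ z w : E, gE (P z) w = gE z (P w))
    (hPpar : ∀ X (Z : E), nablaBar X (P Z) = P (nablaBar X Z))
    (R : TM →ₗ[ℝ] TM) (S : TM →ₗ[ℝ] NM) (St : NM →ₗ[ℝ] TM) (T : NM →ₗ[ℝ] NM)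
    (hPF : ∀ X, P (F X) = F (R X) + J (S X))
    (hPJ : ∀ ξ, P (J ξ) = F (St ξ) + J (T ξ))
    (hSt : ∀ X ξ, gNM (S X) ξ = gTM X (St ξ))
    (hGauss : ∀ X Y, nablaBar X (F Y) = F (nablaM X Y) + J (alpha X Y))
    (hWein : ∀ X ξ, nablaBar X (J ξ) = -F (A ξ X) + J (nablaPerp X ξ)) :
    (∀ X Y, nablaPerp X (S Y) - S (nablaM X Y) = T (alpha X Y) - alpha X (R Y)) ∧
    (∀ X ξ, nablaPerp X (T ξ) - T (nablaPerp X ξ) = -S (A ξ X) - alpha X (St ξ)) :=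
  stmt_16_general F J hindep nablaM nablaPerp nablaBar hbar_add alpha A P hPpar R S St T hPF hPJ
    hGauss hWein
end
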